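/- For every subset γ of A, e_γ · γ = e_γ in ℤStyl(A), where γ on the right of e_γ denotes the image of the decreasing word on γ. -/

import Mathlib

noncomputable section

open FreeMonoid

/-- The defining relations of the stylic congruence: the Knuth (plactic)
relations together with the idempotent relations `a² ≡ a`. -/
inductive StylicRel (A : Type*) [LinearOrder A] : FreeMonoid A → FreeMonoid A → Prop
  | knuth1 {a b c : A} : a < b → b < c →
      StylicRel A (ofList [b, a, c]) (ofList [b, c, a])
  | knuth2 {a b c : A} : a < b → b < c →
      StylicRel A (ofList [a, c, b]) (ofList [c, a, b])
  | knuth3 {a b : A} : a < b →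
      StylicRel A (ofList [b, a, b]) (ofList [b, b, a])
  | knuth4 {a b : A} : a < b →
      StylicRel A (ofList [a, b, a]) (ofList [b, a, a])
  | idem (a : A) : StylicRel A (ofList [a, a]) (ofList [a])

/-- The stylic congruence on the free monoid `A*`. -/
def stylCon (A : Type*) [LinearOrder A] : Con (FreeMonoid A) := conGen (StylicRel A)

/-- The stylic monoid `Styl(A)`. -/
abbrev Styl (A : Type*) [LinearOrder A] := (stylCon A).Quotient

/-- The image of a letter `a` in the stylic algebra `ℤStyl(A)`. -/
def styGen {A : Type*} [LinearOrder A] (a : A) : MonoidAlgebra ℤ (Styl A) :=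
  MonoidAlgebra.of ℤ (Styl A) ((stylCon A).mk' (FreeMonoid.of a))

/-- The idempotent `e_γ = (∏_{a∉γ}^{↗} (1-a)) · (∏_{a∈γ}^{↘} a)` of `ℤStyl(A)`
associated with a column (subset) `γ ⊆ A`. -/
def eIdem {A : Type*} [LinearOrder A] [Fintype A] (γ : Finset A) :
    MonoidAlgebra ℤ (Styl A) :=
  (((γᶜ).sort (· ≤ ·)).map (fun a => 1 - styGen a)).prod *
    ((γ.sort (· ≤ ·)).reverse.map styGen).prod

/-!
Since `e_γ` ends with the decreasing word `c_γ` on `γ`, it suffices that `c_γ² = c_γ` in `Styl(A)`.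
For a decreasing word `a t` with `t < a`, the Knuth relation `b c a ≡ b a c` (`c < b < a`) moves the
second copy of `a` in `a t a` leftwards through `t` until it follows the first letter `b` of `t`;
then `a b a ≡ a a b` and `a a ≡ a` absorb it, so `a t a ≡ a t`. Hence
`(a t)(a t) ≡ a t t ≡ a t` by induction on the length.
-/

namespace Styl

variable {A : Type*} [LinearOrder A]

def letter (a : A) : Styl A := (stylCon A).mk' (of a)

lemma mk'_eq_of_stylicRel {x y : FreeMonoid A} (h : StylicRel A x y) :
    (stylCon A).mk' x = (stylCon A).mk' y :=
  (Con.eq _).2 (ConGen.Rel.of _ _ h)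

lemma letter_mul_self (a : A) : letter a * letter a = letter a :=
  mk'_eq_of_stylicRel (StylicRel.idem a)

lemma letter_mul_letter_mul_letter_comm {a b c : A} (hab : a < b) (hbc : b < c) :
    letter b * letter a * letter c = letter b * letter c * letter a :=
  mk'_eq_of_stylicRel (StylicRel.knuth1 hab hbc)

lemma letter_mul_letter_mul_self {a b : A} (hab : a < b) :
    letter b * letter a * letter b = letter b * letter b * letter a :=
  mk'_eq_of_stylicRel (StylicRel.knuth3 hab)

lemma letter_mul_list_prod_mul_letter {a b : A} {t : List A} (hbt : (b :: t).Pairwise (· > ·))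
    (hba : b < a) (hta : ∀ x ∈ t, x < a) :
    letter b * (t.map letter).prod * letter a = letter b * letter a * (t.map letter).prod := by
  induction t generalizing b with
  | nil => simp
  | cons c t ih =>
    obtain ⟨hcb, hct⟩ := List.pairwise_cons.1 hbt
    have hca : c < a := hta c List.mem_cons_self
    calc letter b * ((c :: t).map letter).prod * letter a
        = letter b * (letter c * (t.map letter).prod * letter a) := by simp [mul_assoc]
      _ = letter b * letter c * letter a * (t.map letter).prod := by
          rw [ih hct hca fun x hx => hta x (List.mem_cons_of_mem c hx)]
          simp only [mul_assoc]
      _ = letter b * letter a * ((c :: t).map letter).prod := by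
          rw [letter_mul_letter_mul_letter_comm (hcb c List.mem_cons_self) hba]
          simp [mul_assoc]

lemma letter_mul_list_prod_mul_self {a : A} {t : List A} (ht : t.Pairwise (· > ·))
    (hta : ∀ x ∈ t, x < a) :
    letter a * (t.map letter).prod * letter a = letter a * (t.map letter).prod := by
  cases t with
  | nil => simpa using letter_mul_self a
  | cons b t =>
    have hba : b < a := hta b List.mem_cons_self
    calc letter a * ((b :: t).map letter).prod * letter a
        = letter a * (letter b * (t.map letter).prod * letter a) := by simp [mul_assoc]
      _ = letter a * letter b * letter a * (t.map letter).prod := by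
          rw [letter_mul_list_prod_mul_letter ht hba fun x hx => hta x (List.mem_cons_of_mem b hx)]
          simp only [mul_assoc]
      _ = letter a * ((b :: t).map letter).prod := by
          rw [letter_mul_letter_mul_self hba, letter_mul_self]
          simp [mul_assoc]

lemma isIdempotentElem_list_prod_map_letter {t : List A} (ht : t.Pairwise (· > ·)) :
    IsIdempotentElem (t.map letter).prod := by
  induction t with
  | nil => simp [IsIdempotentElem]
  | cons a t ih =>
    obtain ⟨hta, ht⟩ := List.pairwise_cons.1 ht
    calc ((a :: t).map letter).prod * ((a :: t).map letter).prod
        = letter a * (t.map letter).prod * letter a * (t.map letter).prod := by simp [mul_assoc]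
      _ = ((a :: t).map letter).prod := by
          rw [letter_mul_list_prod_mul_self ht hta, mul_assoc, (ih ht).eq, List.map_cons,
            List.prod_cons]

end Styl

lemma list_prod_map_styGen {A : Type*} [LinearOrder A] (l : List A) :
    (l.map styGen).prod = MonoidAlgebra.of ℤ (Styl A) (l.map Styl.letter).prod := by
  rw [map_list_prod, List.map_map]
  rfl

lemma isIdempotentElem_list_prod_map_styGen {A : Type*} [LinearOrder A] {l : List A}
    (hl : l.Pairwise (· > ·)) : IsIdempotentElem (l.map styGen).prod := by
  rw [list_prod_map_styGen]
  exact (Styl.isIdempotentElem_list_prod_map_letter hl).map _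

/-- `e_γ · γ = e_γ` in `ℤStyl(A)`, where the second `γ`
denotes the image of the decreasing word on `γ`. -/
theorem eIdem_mul_column {A : Type*} [LinearOrder A] [Fintype A]
    (γ : Finset A) :
    eIdem γ * ((γ.sort (· ≤ ·)).reverse.map styGen).prod = eIdem γ := by
  have hcol : IsIdempotentElem ((γ.sort (· ≤ ·)).reverse.map styGen).prod :=
    isIdempotentElem_list_prod_map_styGen (List.pairwise_reverse.2 γ.sortedLT_sort.pairwise)
  rw [eIdem, mul_assoc, hcol.eq]
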